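/- arXiv:1304.3805 — 2 statements merged into one kernel-verified Lean document; each statement's English description precedes it below -/
import Mathlib

section
/- Let $M = R + iI$ be a complex number, $\xi \in \mathbb{R}$, $\delta t > 0$, and $\Theta \in [0, 1/2)$. Assume $\xi I \geq 0$. Then the $\Theta$-scheme amplification factor satisfies $|1 + i(1-\Theta)\xi\delta t M| \leq |1 - i\Theta\xi\delta t M|$ if and only if $\delta t\, (1 - 2\Theta)\, \xi^2 (R^2 + I^2) \leq 2\, \xi I$. -/
/-! Writing `w = iξδtM`, one has `|1 + c w|² = 1 + 2c Re w + c²|w|²` for real `c`, so the difference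
of the squared moduli of numerator and denominator of the amplification factor is
`2 Re w + (1 - 2Θ)|w|²`; with `Re w = -ξ δt I` and `|w|² = ξ² δt² |M|²`, dividing by `δt > 0`
gives the CFL condition. -/

namespace Complex

theorem normSq_one_add_ofReal_mul (c : ℝ) (w : ℂ) :
    normSq (1 + c * w) = 1 + 2 * c * w.re + c ^ 2 * normSq w := by
  simp only [normSq_apply, add_re, add_im, mul_re, mul_im, one_re, one_im, ofReal_re, ofReal_im]
  ring

theorem norm_one_add_one_sub_mul_le_norm_one_sub_mul_iff (Θ : ℝ) (w : ℂ) :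
    ‖1 + ((1 - Θ : ℝ) : ℂ) * w‖ ≤ ‖1 - (Θ : ℂ) * w‖ ↔ (1 - 2 * Θ) * normSq w ≤ -2 * w.re := by
  have hsub : 1 - (Θ : ℂ) * w = 1 + ((-Θ : ℝ) : ℂ) * w := by push_cast; ring
  rw [hsub, norm_def, norm_def, Real.sqrt_le_sqrt_iff (normSq_nonneg _),
    normSq_one_add_ofReal_mul, normSq_one_add_ofReal_mul]
  constructor <;> intro h <;> nlinarith

end Complex

open Complex in
theorem theta_scheme_stability_iff_general (M : ℂ) (ξ δt Θ : ℝ)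
    (hδt : 0 < δt) :
    ‖(1 + Complex.I * ((1 - Θ : ℝ) : ℂ) * (ξ : ℂ) * (δt : ℂ) * M)‖ ≤
      ‖(1 - Complex.I * (Θ : ℂ) * (ξ : ℂ) * (δt : ℂ) * M)‖ ↔
    δt * (1 - 2 * Θ) * ξ ^ 2 * (M.re ^ 2 + M.im ^ 2) ≤ 2 * (ξ * M.im) := by
  set w := I * ξ * δt * M with hw
  have hre : w.re = -(ξ * δt * M.im) := by simp [hw]
  have hnormSq : normSq w = (ξ * δt) ^ 2 * (M.re ^ 2 + M.im ^ 2) := by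
    rw [hw, map_mul, map_mul, map_mul, normSq_I, normSq_ofReal, normSq_ofReal, normSq_apply]
    ring
  rw [show I * ((1 - Θ : ℝ) : ℂ) * ξ * δt * M = ((1 - Θ : ℝ) : ℂ) * w by ring,
    show I * (Θ : ℂ) * ξ * δt * M = (Θ : ℂ) * w by ring,
    norm_one_add_one_sub_mul_le_norm_one_sub_mul_iff, hre, hnormSq]
  calc (1 - 2 * Θ) * ((ξ * δt) ^ 2 * (M.re ^ 2 + M.im ^ 2)) ≤ -2 * -(ξ * δt * M.im)
        ↔ δt * (δt * (1 - 2 * Θ) * ξ ^ 2 * (M.re ^ 2 + M.im ^ 2)) ≤ δt * (2 * (ξ * M.im)) := by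
          constructor <;> intro h <;> linarith
    _ ↔ _ := mul_le_mul_iff_of_pos_left hδt

/-- Θ-scheme stability criterion: for `Θ ∈ [0, 1/2)` and `ξ * M.im ≥ 0`,
the amplification factor has modulus at most one iff the CFL condition
`δt (1 - 2Θ) ξ² (R² + I²) ≤ 2 ξ I` holds. -/
theorem theta_scheme_stability_iff (M : ℂ) (ξ δt Θ : ℝ)
    (hδt : 0 < δt) (hΘ : Θ ∈ Set.Ico (0 : ℝ) (1 / 2)) (hI : 0 ≤ ξ * M.im) :
    ‖(1 + Complex.I * ((1 - Θ : ℝ) : ℂ) * (ξ : ℂ) * (δt : ℂ) * M)‖ ≤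
      ‖(1 - Complex.I * (Θ : ℂ) * (ξ : ℂ) * (δt : ℂ) * M)‖ ↔
    δt * (1 - 2 * Θ) * ξ ^ 2 * (M.re ^ 2 + M.im ^ 2) ≤ 2 * (ξ * M.im) :=
  theta_scheme_stability_iff_general M ξ δt Θ hδt
end

section
/- Let $\bar u \in \mathbb{R}$, $\bar c, \bar\sigma > 0$, $\delta x > 0$, $\lambda_1 = \delta t/\delta x$, $\lambda_2 = \delta t/\delta x^2$, and $\Theta \in [0,1/2)$. If $(|\bar u| + \bar c)\lambda_1 + 2\sqrt{\bar\sigma}\lambda_2 \leq \sqrt{2/(1-2\Theta)}$, then for all $s \in [0,1]$, $(1-s)\big(\bar u \pm \sqrt{\bar c^2 + 4\bar\sigma s/\delta x^2}\big)^2 \lambda_1^2 + s \leq \frac{2\lambda_1 q}{1-2\Theta}$ with $q = 1/\lambda_1$ (equivalently, the Lax-Friedrichs stability condition of Proposition 2.3 holds with $q = 1/\lambda_1$). -/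
/-!
With `r = √(c̄² + 4σ̄s/δx²) ≤ c̄ + 2√σ̄/δx`, both symbols `v = ū ± r` satisfy
`|v| λ₁ ≤ (|ū| + c̄)λ₁ + 2√σ̄ λ₂ ≤ K := √(2/(1-2Θ))`. Since `K² ≥ 1`, the left-hand side
`(1-s)(vλ₁)² + s` is a convex combination of two numbers at most `K²`, and with `q = 1/λ₁`
the right-hand side is exactly `K²`.
-/

theorem Real.sqrt_sq_add_le_add {a b x : ℝ} (ha : 0 ≤ a) (hb : 0 ≤ b) (hx : x ≤ b ^ 2) :
    √(a ^ 2 + x) ≤ a + b := by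
  rw [Real.sqrt_le_iff]
  exact ⟨by positivity, by nlinarith⟩

theorem sq_mul_le_sq_of_abs_le {v M lam K : ℝ} (hv : |v| ≤ M) (hlam : 0 ≤ lam)
    (hK : M * lam ≤ K) : (v * lam) ^ 2 ≤ K ^ 2 := by
  have hvlam : |v * lam| ≤ K := by
    rw [abs_mul, abs_of_nonneg hlam]
    exact (mul_le_mul_of_nonneg_right hv hlam).trans hK
  simpa only [sq_abs] using pow_le_pow_left₀ (abs_nonneg _) hvlam 2

theorem one_sub_mul_add_le_of_le {s w A : ℝ} (hs0 : 0 ≤ s) (hs1 : s ≤ 1)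
    (hw : w ≤ A) (hA : 1 ≤ A) : (1 - s) * w + s ≤ A := by
  nlinarith

/-- Corollary of Proposition 2.3 for the classical Lax–Friedrichs scheme (`q = 1/lam1`):
the condition `(|ū| + c̄)lam1 + 2√σ̄ lam2 ≤ √(2/(1-2Θ))` implies the sharp stability
condition for all `s ∈ [0,1]`. -/
theorem lax_friedrichs_cfl (u c σ δx δt lam1 lam2 Θ : ℝ)
    (hc : 0 < c) (hσ : 0 < σ) (hδx : 0 < δx) (hδt : 0 < δt)
    (hlam1 : lam1 = δt / δx) (hlam2 : lam2 = δt / δx ^ 2)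
    (hΘ : Θ ∈ Set.Ico (0 : ℝ) (1 / 2))
    (h : (|u| + c) * lam1 + 2 * Real.sqrt σ * lam2 ≤ Real.sqrt (2 / (1 - 2 * Θ))) :
    ∀ s ∈ Set.Icc (0 : ℝ) 1,
      (1 - s) * (u + Real.sqrt (c ^ 2 + 4 * σ * s / δx ^ 2)) ^ 2 * lam1 ^ 2 + s ≤
          2 * lam1 * (1 / lam1) / (1 - 2 * Θ) ∧
        (1 - s) * (u - Real.sqrt (c ^ 2 + 4 * σ * s / δx ^ 2)) ^ 2 * lam1 ^ 2 + s ≤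
          2 * lam1 * (1 / lam1) / (1 - 2 * Θ) := by
  rintro s ⟨hs0, hs1⟩
  obtain ⟨hΘ0, hΘ1⟩ := hΘ
  have hΘpos : 0 < 1 - 2 * Θ := by linarith
  have hlam1pos : 0 < lam1 := hlam1 ▸ div_pos hδt hδx
  have hrhs : 2 * lam1 * (1 / lam1) / (1 - 2 * Θ) = √(2 / (1 - 2 * Θ)) ^ 2 := by
    rw [Real.sq_sqrt (by positivity)]
    field_simp
  have hK : 1 ≤ √(2 / (1 - 2 * Θ)) ^ 2 := by
    rw [Real.sq_sqrt (by positivity), le_div_iff₀ hΘpos]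
    linarith
  have hr : √(c ^ 2 + 4 * σ * s / δx ^ 2) ≤ c + 2 * √σ / δx := by
    refine Real.sqrt_sq_add_le_add hc.le (by positivity) ?_
    rw [div_pow, mul_pow, Real.sq_sqrt hσ.le]
    gcongr ?_ / _
    nlinarith
  have hM : (|u| + c + 2 * √σ / δx) * lam1 ≤ √(2 / (1 - 2 * Θ)) := by
    convert h using 1
    rw [hlam1, hlam2]
    field_simp
  have hsymbol : ∀ v, |v| ≤ |u| + c + 2 * √σ / δx →
      (1 - s) * v ^ 2 * lam1 ^ 2 + s ≤ 2 * lam1 * (1 / lam1) / (1 - 2 * Θ) := fun v hv => by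
    rw [hrhs, mul_assoc, ← mul_pow]
    exact one_sub_mul_add_le_of_le hs0 hs1 (sq_mul_le_sq_of_abs_le hv hlam1pos.le hM) hK
  have hr0 := Real.sqrt_nonneg (c ^ 2 + 4 * σ * s / δx ^ 2)
  constructor <;> apply hsymbol
  · exact (abs_add_le _ _).trans (by rw [abs_of_nonneg hr0]; linarith)
  · exact (abs_sub _ _).trans (by rw [abs_of_nonneg hr0]; linarith)
end
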